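/- arXiv:1407.5743 — 5 statements merged into one kernel-verified Lean document; each statement's English description precedes it below -/
import Mathlib

section
/- Let (Z, λ) be an equiconnected space, n ≥ 2, 1 ≤ k ≤ n, let x_1,…,x_n ∈ Z and (α_1,…,α_n) ∈ S_n with α_k = 0. Then λ_n(x_1,…,x_n, α_1,…,α_n) = λ_{n−1}(x_1,…,x_{k−1}, x_{k+1},…,x_n, α_1,…,α_{k−1}, α_{k+1},…,α_n), i.e. an element with zero coefficient may be dropped from a convex combination. -/
open Set Function Filter Topology

universe u

/-- An *equiconnecting* map on `Z`: a map `λ : Z × Z × [0,1] → Z`, continuous on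
`Z × Z × [0,1]`, with `λ(x,y,0) = x`, `λ(x,y,1) = y` and `λ(x,x,t) = x`. -/
structure IsEquiconnecting {Z : Type*} [TopologicalSpace Z] (lam : Z → Z → ℝ → Z) : Prop where
  continuousOn : ContinuousOn (fun p : Z × Z × ℝ => lam p.1 p.2.1 p.2.2)
    (Set.univ ×ˢ Set.univ ×ˢ Set.Icc (0 : ℝ) 1)
  map_zero : ∀ x y : Z, lam x y 0 = x
  map_one : ∀ x y : Z, lam x y 1 = y
  map_diag : ∀ x : Z, ∀ t ∈ Set.Icc (0 : ℝ) 1, lam x x t = x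

/-- `lambdaIter lam n` is the map `λ_{n+1} : Z^{n+1} × S_{n+1} → Z` from the paper,
defined recursively. -/
noncomputable def lambdaIter {Z : Type*} (lam : Z → Z → ℝ → Z) :
    (n : ℕ) → (Fin (n + 1) → Z) → (Fin (n + 1) → ℝ) → Z
  | 0, x, _ => x 0
  | n + 1, x, a =>
      if 0 < a 0 + a 1 then
        lambdaIter lam n
          (Fin.cons (lam (x 0) (x 1) (a 1 / (a 0 + a 1))) fun i => x i.succ.succ)
          (Fin.cons (a 0 + a 1) fun i => a i.succ.succ)
      else
        lambdaIter lam n (fun i => x i.succ) fun i => a i.succ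

/-- `lambdaIterSet lam A n` is the set `λ^n(A)`:  `λ^0(A) = A` and
`λ^{n+1}(A) = λ(λ^n(A) × A × [0,1])`. -/
def lambdaIterSet {Z : Type*} (lam : Z → Z → ℝ → Z) (A : Set Z) : ℕ → Set Z
  | 0 => A
  | n + 1 => (fun p : Z × Z × ℝ => lam p.1 p.2.1 p.2.2) ''
      (lambdaIterSet lam A n ×ˢ A ×ˢ Set.Icc (0 : ℝ) 1)

/-- `λ^∞(A) = ⋃_{n ≥ 1} λ^n(A)`. -/
def lambdaInftySet {Z : Type*} (lam : Z → Z → ℝ → Z) (A : Set Z) : Set Z :=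
  ⋃ n : ℕ, lambdaIterSet lam A (n + 1)

/-- An equiconnected space `(Z, λ)` is locally convex if every point has arbitrarily small
neighborhoods `V` with `λ^∞(V)` inside a given neighborhood. -/
def IsLocallyConvexEquiconnected {Z : Type*} [TopologicalSpace Z] (lam : Z → Z → ℝ → Z) :
    Prop :=
  ∀ z : Z, ∀ U ∈ nhds z, ∃ V ∈ nhds z, lambdaInftySet lam V ⊆ U

/-- A map is Baire-one if it is the pointwise limit of a sequence of continuous maps. -/
def BaireOne {Y Z : Type*} [TopologicalSpace Y] [TopologicalSpace Z] (g : Y → Z) : Prop :=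
  ∃ h : ℕ → Y → Z, (∀ n, Continuous (h n)) ∧
    ∀ y, Filter.Tendsto (fun n => h n y) Filter.atTop (nhds (g y))

/-- A locally finite partition of unity on `X`: continuous `[0,1]`-valued functions whose
supports (closures of the sets where they are nonzero) form a locally finite family and whose
pointwise sum is `1`. -/
def IsLocFinPartitionOfUnity {I X : Type*} [TopologicalSpace X] (φ : I → X → ℝ) : Prop :=
  (∀ i, Continuous (φ i)) ∧ (∀ i x, φ i x ∈ Set.Icc (0 : ℝ) 1) ∧
    (LocallyFinite fun i => closure (Function.support (φ i))) ∧ ∀ x, ∑ᶠ i, φ i x = 1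

/-- A strong PP-space: for every dense `D ⊆ X` there are a sequence of locally finite
partitions of unity and families of points of `D` such that points attached to the supports
containing `x` converge to `x` uniformly in the index, in the sense of condition (3). -/
def IsStrongPPSpace (X : Type*) [TopologicalSpace X] : Prop :=
  ∀ D : Set X, Dense D →
    ∃ (I : ℕ → Type u) (φ : ∀ n, I n → X → ℝ) (p : ∀ n, I n → X),
      (∀ n, IsLocFinPartitionOfUnity (φ n)) ∧ (∀ n i, p n i ∈ D) ∧
      ∀ x : X, ∀ U ∈ nhds x, ∃ n₀ : ℕ, ∀ n ≥ n₀, ∀ i : I n,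
        x ∈ closure (Function.support (φ n i)) → p n i ∈ U

/-- A zero set: the preimage of `{0}` under a continuous function `X → [0,1]`. -/
def IsZeroSet {X : Type*} [TopologicalSpace X] (A : Set X) : Prop :=
  ∃ f : X → ℝ, Continuous f ∧ (∀ x, f x ∈ Set.Icc (0 : ℝ) 1) ∧ A = f ⁻¹' {0}

/-- A cozero set: the preimage of `(0,1]` under a continuous function `X → [0,1]`. -/
def IsCozeroSet {X : Type*} [TopologicalSpace X] (A : Set X) : Prop :=
  ∃ f : X → ℝ, Continuous f ∧ (∀ x, f x ∈ Set.Icc (0 : ℝ) 1) ∧ A = f ⁻¹' Set.Ioc (0 : ℝ) 1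

/-- A functionally ambiguous set: simultaneously a countable union of zero sets and a
countable intersection of cozero sets. -/
def IsFunctionallyAmbiguous {X : Type*} [TopologicalSpace X] (A : Set X) : Prop :=
  (∃ F : ℕ → Set X, (∀ n, IsZeroSet (F n)) ∧ A = ⋃ n, F n) ∧
    ∃ B : ℕ → Set X, (∀ n, IsCozeroSet (B n)) ∧ A = ⋂ n, B n

/-- A discrete family of sets: every point has a neighborhood meeting at most one member. -/
def IsDiscreteFamily {I X : Type*} [TopologicalSpace X] (A : I → Set X) : Prop :=
  ∀ x : X, ∃ U ∈ nhds x, {i : I | (U ∩ A i).Nonempty}.Subsingleton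

/-- Weakly collectionwise normal: every discrete family of zero sets can be separated by a
discrete family of cozero sets. -/
def WeaklyCollectionwiseNormal (X : Type*) [TopologicalSpace X] : Prop :=
  ∀ (S : Type u) (F : S → Set X), (∀ s, IsZeroSet (F s)) → IsDiscreteFamily F →
    ∃ U : S → Set X, (∀ s, IsCozeroSet (U s)) ∧ IsDiscreteFamily U ∧ ∀ s, F s ⊆ U s

/-- A contracting structure on `Z`: a continuous `γ : Z × [0,1] → Z` with `γ(z,0) = z` and
`γ(z,1) = z₀`. -/
structure IsContracting {Z : Type*} [TopologicalSpace Z] (γ : Z → ℝ → Z) (z₀ : Z) :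
    Prop where
  continuousOn : ContinuousOn (fun p : Z × ℝ => γ p.1 p.2) (Set.univ ×ˢ Set.Icc (0 : ℝ) 1)
  map_zero : ∀ z : Z, γ z 0 = z
  map_one : ∀ z : Z, γ z 1 = z₀

private lemma simplex_drop {m : ℕ} (a : Fin (m + 2) → ℝ) (k : Fin (m + 2))
    (ha : a ∈ stdSimplex ℝ (Fin (m + 2))) (hk : a k = 0) :
    (fun j => a (k.succAbove j)) ∈ stdSimplex ℝ (Fin (m + 1)) := by
  refine ⟨fun i => ha.1 _, ?_⟩
  have h := Fin.sum_univ_succAbove a k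
  rw [hk, zero_add] at h
  rw [← h]; exact ha.2

/-- In an equiconnected space, an element with zero coefficient may be dropped
from a convex combination: for `n = m + 2 ≥ 2`, `1 ≤ k ≤ n` (here `k : Fin (m+2)`),
`λ_n(x₁,…,xₙ,α₁,…,αₙ) = λ_{n-1}(…, x̂_k, …, α̂_k, …)` whenever `α_k = 0`.
(`lambdaIter lam n` is `λ_{n+1}`, and `Fin.succAbove k` enumerates the indices `≠ k`
in increasing order.) -/
theorem lambdaIter_drop_zero_coeff {Z : Type*} [TopologicalSpace Z] (lam : Z → Z → ℝ → Z)
    (hlam : IsEquiconnecting lam) (m : ℕ) (k : Fin (m + 2)) (x : Fin (m + 2) → Z)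
    (a : Fin (m + 2) → ℝ) (ha : a ∈ stdSimplex ℝ (Fin (m + 2))) (hk : a k = 0) :
    lambdaIter lam (m + 1) x a =
      lambdaIter lam m (fun j => x (k.succAbove j)) fun j => a (k.succAbove j) := by
  induction m with
  | zero =>
    have h01 : a 0 + a 1 = 1 := by
      have := ha.2; simpa [Fin.sum_univ_two] using this
    conv_lhs => rw [lambdaIter]
    rw [if_pos (show (0:ℝ) < a 0 + a 1 by rw [h01]; norm_num)]
    simp only [lambdaIter, Fin.cons_zero, h01, div_one]
    induction k using Fin.cases with
    | zero =>
      have h1 : a 1 = 1 := by rw [hk, zero_add] at h01; exact h01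
      rw [h1, hlam.map_one, Fin.zero_succAbove, Fin.succ_zero_eq_one]
    | succ k' =>
      have hk1 : k' = 0 := Subsingleton.elim _ _
      subst hk1
      rw [show a 1 = 0 from hk, hlam.map_zero, Fin.succ_succAbove_zero]
  | succ m ih =>
    induction k using Fin.cases with
    | zero =>
      by_cases h : 0 < a 0 + a 1
      · conv_lhs => rw [lambdaIter]
        rw [if_pos h]
        have h1 : a 1 / (a 0 + a 1) = 1 := by
          rw [hk, zero_add] at h ⊢; field_simp
        rw [h1, hlam.map_one]
        congr 1
        · funext j
          induction j using Fin.cases with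
          | zero => simp [Fin.zero_succAbove]
          | succ j' => simp [Fin.zero_succAbove]
        · funext j
          induction j using Fin.cases with
          | zero => simp [Fin.zero_succAbove, hk]
          | succ j' => simp [Fin.zero_succAbove]
      · conv_lhs => rw [lambdaIter]
        rw [if_neg h]
        congr 1 <;> funext j <;> rw [Fin.zero_succAbove]
    | succ k' =>
      induction k' using Fin.cases with
      | zero =>
        -- k = 1, a 1 = 0
        have hk' : a 1 = 0 := by simpa using hk
        by_cases h : 0 < a 0
        · conv_lhs => rw [lambdaIter]
          rw [if_pos (show (0:ℝ) < a 0 + a 1 by rw [hk', add_zero]; exact h)]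
          have h1 : a 1 / (a 0 + a 1) = 0 := by rw [hk']; simp
          rw [h1, hlam.map_zero]
          congr 1
          · funext j
            induction j using Fin.cases with
            | zero => simp [Fin.succ_succAbove_zero]
            | succ j' => simp [Fin.succ_succAbove_succ, Fin.zero_succAbove]
          · funext j
            induction j using Fin.cases with
            | zero => simp [Fin.succ_succAbove_zero, hk']
            | succ j' => simp [Fin.succ_succAbove_succ, Fin.zero_succAbove]
        · -- a 0 = 0 and a 1 = 0
          have h0 : a 0 = 0 := le_antisymm (not_lt.mp h) (ha.1 0)
          have hcond : ¬ (0 : ℝ) < a 0 + a 1 := by rw [h0, hk']; norm_num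
          conv_lhs => rw [lambdaIter]
          rw [if_neg hcond]
          have hmem : (fun i => a i.succ) ∈ stdSimplex ℝ (Fin (m + 2)) := by
            refine ⟨fun i => ha.1 _, ?_⟩
            have := ha.2
            rw [Fin.sum_univ_succ, h0, zero_add] at this
            exact this
          rw [ih 0 (fun i => x i.succ) (fun i => a i.succ) hmem (by simpa using hk)]
          have hmem2 : (fun j => a ((Fin.succ 0 : Fin (m+3)).succAbove j))
              ∈ stdSimplex ℝ (Fin (m + 2)) := simplex_drop a (Fin.succ 0) ha hk
          rw [ih 0 _ _ hmem2 (by simpa [Fin.succ_succAbove_zero] using h0)]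
          congr 1 <;> funext j <;>
            simp [Fin.zero_succAbove, Fin.succ_succAbove_succ]
      | succ k'' =>
        -- k = k''.succ.succ
        by_cases h : 0 < a 0 + a 1
        · conv_lhs => rw [lambdaIter]
          rw [if_pos h]
          have hmem : (Fin.cons (a 0 + a 1) fun i => a i.succ.succ)
              ∈ stdSimplex ℝ (Fin (m + 2)) := by
            constructor
            · intro i
              induction i using Fin.cases with
              | zero => simpa using add_nonneg (ha.1 0) (ha.1 1)
              | succ j => simpa using ha.1 j.succ.succ
            · rw [Fin.sum_cons]
              have := ha.2
              rw [Fin.sum_univ_succ, Fin.sum_univ_succ, ← add_assoc] at this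
              exact this
          rw [ih k''.succ _ _ hmem (by simpa using hk)]
          conv_rhs => rw [lambdaIter]
          have hone : k''.succ.succ.succAbove 1 = 1 := by
            rw [← Fin.succ_zero_eq_one, Fin.succ_succAbove_succ, Fin.succ_succAbove_zero,
              Fin.succ_zero_eq_one]
          rw [if_pos (show (0:ℝ) <
              a (k''.succ.succ.succAbove 0) + a (k''.succ.succ.succAbove 1) by
            rw [Fin.succ_succAbove_zero, hone]; exact h)]
          congr 1
          · funext j
            induction j using Fin.cases with
            | zero =>
              simp [Fin.succ_succAbove_zero, Fin.succ_succAbove_succ]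
            | succ j' =>
              simp [Fin.succ_succAbove_zero, Fin.succ_succAbove_succ]
          · funext j
            induction j using Fin.cases with
            | zero =>
              simp [Fin.succ_succAbove_zero, Fin.succ_succAbove_succ]
            | succ j' =>
              simp [Fin.succ_succAbove_zero, Fin.succ_succAbove_succ]
        · have h0 : a 0 = 0 := le_antisymm (by nlinarith [ha.1 0, ha.1 1, not_lt.mp h]) (ha.1 0)
          conv_lhs => rw [lambdaIter]
          rw [if_neg h]
          have hmem : (fun i => a i.succ) ∈ stdSimplex ℝ (Fin (m + 2)) := by
            refine ⟨fun i => ha.1 _, ?_⟩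
            have := ha.2
            rw [Fin.sum_univ_succ, h0, zero_add] at this
            exact this
          rw [ih k''.succ (fun i => x i.succ) (fun i => a i.succ) hmem (by simpa using hk)]
          conv_rhs => rw [lambdaIter]
          have hone : k''.succ.succ.succAbove 1 = 1 := by
            rw [← Fin.succ_zero_eq_one, Fin.succ_succAbove_succ, Fin.succ_succAbove_zero,
              Fin.succ_zero_eq_one]
          rw [if_neg (show ¬ (0:ℝ) <
              a (k''.succ.succ.succAbove 0) + a (k''.succ.succ.succAbove 1) by
            rw [Fin.succ_succAbove_zero, hone]; exact h)]
          congr 1 <;> funext j <;> rw [Fin.succ_succAbove_succ]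
end

section
/- Let (Z, λ) be an equiconnected space. Then for every n ∈ ℕ the map λ_n : Z^n × S_n → Z is continuous (where S_n carries the subspace topology from ℝ^n and Z^n × S_n the product topology). -/
open Set Function Filter Topology

universe u

/-!
By induction on `n`. On the simplex, `λ_{n+2}(x, a)` equals `λ_{n+1}` applied to the tuple in
which `x₀, x₁` are merged into `λ(x₀, x₁, t)` with weight `a₀ + a₁`, where `t = a₁ / (a₀ + a₁)`.
Where `a₀ + a₁ > 0` the ratio `t` is continuous and we conclude by composition. Where
`a₀ + a₁ = 0` the merged point has weight `0`, so the value does not depend on `t`; as `t` ranges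
over the compact interval `[0, 1]`, a tube lemma makes the discontinuity of `t` harmless.
-/

theorem ContinuousOn.tendsto_comp_of_isCompact_of_forall_eq {T P Y : Type*} [TopologicalSpace T]
    [TopologicalSpace P] [TopologicalSpace Y] {K : Set T} {S : Set P} {G : T × P → Y}
    (hG : ContinuousOn G (K ×ˢ S)) (hK : IsCompact K) {p₀ : P} (hp₀ : p₀ ∈ S) {y : Y}
    (hy : ∀ t ∈ K, G (t, p₀) = y) {τ : P → T} (hτ : MapsTo τ S K) :
    Tendsto (fun p => G (τ p, p)) (𝓝[S] p₀) (𝓝 y) := by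
  intro U hU
  rw [mem_map]
  have hpre : G ⁻¹' U ∈ 𝓝ˢ[K ×ˢ S] (K ×ˢ {p₀}) := by
    refine nhdsSetWithin_mono_left ?_
      (hG.preimage_mem_nhdsSetWithin_of_mem_nhdsSet (t := {y}) (by rwa [nhdsSet_singleton]))
    rintro ⟨t, p⟩ ⟨ht, rfl⟩
    exact ⟨⟨ht, hp₀⟩, hy t ht⟩
  obtain ⟨V, hV, hKV⟩ := generalized_tube_lemma_right hK isCompact_singleton hpre
  rw [nhdsSetWithin_singleton] at hV
  filter_upwards [hV, self_mem_nhdsWithin] with p hpV hpS using hKV ⟨hτ hpS, hpV⟩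

theorem Fin.cons_add_mem_stdSimplex {n : ℕ} {a : Fin (n + 2) → ℝ}
    (ha : a ∈ stdSimplex ℝ (Fin (n + 2))) :
    (Fin.cons (a 0 + a 1) fun i => a i.succ.succ : Fin (n + 1) → ℝ) ∈
      stdSimplex ℝ (Fin (n + 1)) := by
  refine ⟨Fin.cases (add_nonneg (ha.1 0) (ha.1 1)) fun i => ha.1 i.succ.succ, ?_⟩
  have hsum := ha.2
  rw [Fin.sum_univ_succ, Fin.sum_univ_succ] at hsum
  simpa [Fin.sum_univ_succ, add_assoc] using hsum

theorem div_add_mem_Icc {a b : ℝ} (ha : 0 ≤ a) (hb : 0 ≤ b) : b / (a + b) ∈ Icc (0 : ℝ) 1 :=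
  ⟨by positivity, div_le_one_of_le₀ (le_add_of_nonneg_left ha) (add_nonneg ha hb)⟩

section lambdaIter

variable {Z : Type*}

def mergeHead (lam : Z → Z → ℝ → Z) {n : ℕ} (t : ℝ)
    (p : (Fin (n + 2) → Z) × (Fin (n + 2) → ℝ)) : (Fin (n + 1) → Z) × (Fin (n + 1) → ℝ) :=
  (Fin.cons (lam (p.1 0) (p.1 1) t) fun i => p.1 i.succ.succ,
    Fin.cons (p.2 0 + p.2 1) fun i => p.2 i.succ.succ)

variable {lam : Z → Z → ℝ → Z}

theorem lambdaIter_succ_of_head_eq_zero (hone : ∀ x y : Z, lam x y 1 = y) {n : ℕ}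
    (x : Fin (n + 2) → Z) {a : Fin (n + 2) → ℝ} (ha : a 0 = 0) :
    lambdaIter lam (n + 1) x a = lambdaIter lam n (fun i => x i.succ) fun i => a i.succ := by
  rw [lambdaIter]
  split_ifs with h
  · rw [ha, zero_add] at h
    rw [ha, zero_add, div_self h.ne', hone]
    congr 1 <;> ext i <;> cases i using Fin.cases <;> simp
  · rfl

theorem lambdaIter_cons_eq_of_head_eq_zero (hone : ∀ x y : Z, lam x y 1 = y) {n : ℕ}
    {a : Fin (n + 1) → ℝ} (ha : a ∈ stdSimplex ℝ (Fin (n + 1))) (ha0 : a 0 = 0) (y y' : Z)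
    (x : Fin n → Z) :
    lambdaIter lam n (Fin.cons y x) a = lambdaIter lam n (Fin.cons y' x) a := by
  cases n with
  | zero => simpa [ha0] using ha.2
  | succ n =>
    rw [lambdaIter_succ_of_head_eq_zero hone _ ha0,
      lambdaIter_succ_of_head_eq_zero hone _ ha0]
    simp only [Fin.cons_succ]

/-- When `a 0 + a 1 = 0` the ratio below is the junk value `0`, which is harmless since the
merged point then has weight `0`. -/
theorem lambdaIter_succ_eq_mergeHead (hone : ∀ x y : Z, lam x y 1 = y) {n : ℕ}
    (x : Fin (n + 2) → Z) {a : Fin (n + 2) → ℝ} (ha : a ∈ stdSimplex ℝ (Fin (n + 2))) :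
    lambdaIter lam (n + 1) x a =
      lambdaIter lam n (mergeHead lam (a 1 / (a 0 + a 1)) (x, a)).1
        (mergeHead lam (a 1 / (a 0 + a 1)) (x, a)).2 := by
  rw [lambdaIter]
  split_ifs with h
  · rfl
  · have ha0 : a 0 = 0 := by linarith [ha.1 0, ha.1 1]
    have ha1 : a 1 = 0 := by linarith [ha.1 0, ha.1 1]
    have hx : (fun i => x i.succ) = Fin.cons (x 1) fun i => x i.succ.succ := by
      ext i; cases i using Fin.cases <;> rfl
    have ha' : (fun i => a i.succ) = (mergeHead lam (a 1 / (a 0 + a 1)) (x, a)).2 := by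
      ext i; cases i using Fin.cases <;> simp [mergeHead, ha0, ha1]
    rw [hx, ha']
    exact lambdaIter_cons_eq_of_head_eq_zero hone (Fin.cons_add_mem_stdSimplex ha)
      (by simp [ha0, ha1]) _ _ _

theorem continuousOn_mergeHead [TopologicalSpace Z]
    (hcont : ContinuousOn (fun p : Z × Z × ℝ => lam p.1 p.2.1 p.2.2)
      (univ ×ˢ univ ×ˢ Icc 0 1))
    {n : ℕ} : ContinuousOn (fun r : ℝ × (Fin (n + 2) → Z) × (Fin (n + 2) → ℝ) =>
      mergeHead lam r.1 r.2) (Icc 0 1 ×ˢ univ) := by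
  have hhead : ContinuousOn (fun r : ℝ × (Fin (n + 2) → Z) × (Fin (n + 2) → ℝ) =>
      lam (r.2.1 0) (r.2.1 1) r.1) (Icc 0 1 ×ˢ univ) :=
    hcont.comp
      (f := fun r : ℝ × (Fin (n + 2) → Z) × (Fin (n + 2) → ℝ) => (r.2.1 0, r.2.1 1, r.1))
      (by fun_prop) fun _ hr => ⟨trivial, trivial, hr.1⟩
  exact (hhead.finCons (by fun_prop)).prodMk (by fun_prop)

theorem continuousOn_lambdaIter_succ [TopologicalSpace Z]
    (hcont : ContinuousOn (fun p : Z × Z × ℝ => lam p.1 p.2.1 p.2.2)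
      (univ ×ˢ univ ×ˢ Icc 0 1))
    (hone : ∀ x y : Z, lam x y 1 = y) {n : ℕ}
    (ih : ContinuousOn (fun p : (Fin (n + 1) → Z) × (Fin (n + 1) → ℝ) =>
      lambdaIter lam n p.1 p.2) (univ ×ˢ stdSimplex ℝ (Fin (n + 1)))) :
    ContinuousOn (fun p : (Fin (n + 2) → Z) × (Fin (n + 2) → ℝ) =>
      lambdaIter lam (n + 1) p.1 p.2) (univ ×ˢ stdSimplex ℝ (Fin (n + 2))) := by
  set S : Set ((Fin (n + 2) → Z) × (Fin (n + 2) → ℝ)) := univ ×ˢ stdSimplex ℝ (Fin (n + 2))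
  set G := fun r : ℝ × (Fin (n + 2) → Z) × (Fin (n + 2) → ℝ) =>
    lambdaIter lam n (mergeHead lam r.1 r.2).1 (mergeHead lam r.1 r.2).2
  set τ := fun p : (Fin (n + 2) → Z) × (Fin (n + 2) → ℝ) => p.2 1 / (p.2 0 + p.2 1)
  have hG : ContinuousOn G (Icc 0 1 ×ˢ S) :=
    ih.comp ((continuousOn_mergeHead hcont).mono (prod_mono subset_rfl (subset_univ S)))
      fun r hr => ⟨trivial, Fin.cons_add_mem_stdSimplex hr.2.2⟩
  have hτ : MapsTo τ S (Icc 0 1) := fun p hp => div_add_mem_Icc (hp.2.1 0) (hp.2.1 1)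
  refine ContinuousOn.congr (f := fun p => G (τ p, p)) ?_
    fun p hp => lambdaIter_succ_eq_mergeHead hone p.1 hp.2
  intro p hp
  rcases (add_nonneg (hp.2.1 0) (hp.2.1 1)).eq_or_lt with hzero | hpos
  · have hconst : ∀ t ∈ Icc (0 : ℝ) 1, G (t, p) = G (τ p, p) := fun t _ =>
      lambdaIter_cons_eq_of_head_eq_zero hone (Fin.cons_add_mem_stdSimplex hp.2)
        hzero.symm _ _ _
    exact hG.tendsto_comp_of_isCompact_of_forall_eq isCompact_Icc hp hconst hτ
  · have hτp : ContinuousAt τ p :=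
      ((continuous_apply 1).comp continuous_snd).continuousAt.div (by fun_prop) hpos.ne'
    exact (hG _ ⟨hτ hp, hp⟩).comp (hτp.continuousWithinAt.prodMk continuousWithinAt_id)
      fun q hq => ⟨hτ hq, hq⟩

end lambdaIter

/-- In an equiconnected space `(Z, λ)`, every map `λ_n : Z^n × S_n → Z` is
continuous (on `Z^n × S_n`, with `S_n` the standard simplex in `ℝ^n`).
(`lambdaIter lam n` is `λ_{n+1}`, so this covers all `n ≥ 1`.) -/
theorem lambdaIter_continuousOn {Z : Type*} [TopologicalSpace Z] (lam : Z → Z → ℝ → Z)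
    (hlam : IsEquiconnecting lam) (n : ℕ) :
    ContinuousOn (fun p : (Fin (n + 1) → Z) × (Fin (n + 1) → ℝ) => lambdaIter lam n p.1 p.2)
      (Set.univ ×ˢ stdSimplex ℝ (Fin (n + 1))) := by
  induction n with
  | zero => exact (continuous_apply 0 |>.comp continuous_fst).continuousOn
  | succ n ih => exact continuousOn_lambdaIter_succ hlam.continuousOn hlam.map_one ih
end

section
/- Let (Z, λ) be an equiconnected space and A ⊆ Z a nonempty set. Then for every n ≥ 1, λ^{n−1}(A) = {λ_n(x_1,…,x_n, α_1,…,α_n) : (x_1,…,x_n) ∈ A^n, (α_1,…,α_n) ∈ S_n}; that is, the iterated set λ^{n−1}(A) coincides with the set of all convex combinations of n elements of A. -/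
open Set Function Filter Topology

universe u

/-!
Both inclusions are inductions on `n`. A point `λ(w, y, t)` of `λ^{n+1}(A)` with
`w = λ_{n+1}(x, α)` equals `λ_{n+2}(x, y; (1 - t)α, t)`: appending a point of weight `t` to a
combination of total weight `s` performs one more `λ`-step with parameter `t / (s + t)`, and
`λ_{n+1}` does not see a positive rescaling of the weights (for `t = 1` one uses instead the
constant combination of `y`, which is `y` because `λ(y, y, t) = y`). Conversely, the recursion
defining `λ_{m+1}` performs one `λ`-step per merge of two leading weights, and dropping a zero
leading weight only loses steps, which is harmless since `λ(z, y, 0) = z` makes the sets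
`λ^k(A)` increase with `k`.
-/

theorem Fin.snoc_succ {β : Sort*} {n : ℕ} (q : Fin (n + 1) → β) (y : β) :
    (fun i : Fin (n + 1) => (Fin.snoc q y : Fin (n + 2) → β) i.succ) =
      Fin.snoc (fun i : Fin n => q i.succ) y := by
  funext i
  induction i using Fin.lastCases with
  | last => simp [Fin.succ_last]
  | cast k => rw [Fin.succ_castSucc, Fin.snoc_castSucc, Fin.snoc_castSucc]

theorem Fin.snoc_succ_succ {β : Sort*} {n : ℕ} (q : Fin (n + 2) → β) (y : β) :
    (fun i : Fin (n + 1) => (Fin.snoc q y : Fin (n + 3) → β) i.succ.succ) =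
      Fin.snoc (fun i : Fin n => q i.succ.succ) y := by
  funext i
  induction i using Fin.lastCases with
  | last => simp [Fin.succ_last]
  | cast k => rw [Fin.succ_castSucc, Fin.succ_castSucc, Fin.snoc_castSucc, Fin.snoc_castSucc]

theorem Fin.sum_cons_add_succ_succ {M : Type*} [AddCommMonoid M] {n : ℕ} (b : Fin (n + 2) → M) :
    ∑ i, (Fin.cons (b 0 + b 1) (fun i : Fin n => b i.succ.succ) : Fin (n + 1) → M) i =
      ∑ i, b i := by
  rw [Fin.sum_cons, Fin.sum_univ_succ, Fin.sum_univ_succ, add_assoc]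
  rfl

theorem cons_add_succ_succ_nonneg {n : ℕ} {b : Fin (n + 2) → ℝ} (hb : 0 ≤ b) :
    0 ≤ (Fin.cons (b 0 + b 1) (fun i : Fin n => b i.succ.succ) : Fin (n + 1) → ℝ) := by
  intro i
  induction i using Fin.cases with
  | zero => simpa using add_nonneg (hb 0) (hb 1)
  | succ k => simpa using hb k.succ.succ

theorem div_add_mem_Icc_s3 {s t : ℝ} (hs : 0 ≤ s) (ht : 0 ≤ t) : t / (s + t) ∈ Icc (0 : ℝ) 1 :=
  ⟨div_nonneg ht (add_nonneg hs ht), div_le_one_of_le₀ (le_add_of_nonneg_left hs)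
    (add_nonneg hs ht)⟩

section lambdaIter

variable {Z : Type*} {lam : Z → Z → ℝ → Z} {n : ℕ}

theorem lambdaIter_succ_of_pos {x : Fin (n + 2) → Z} {a : Fin (n + 2) → ℝ}
    (h : 0 < a 0 + a 1) :
    lambdaIter lam (n + 1) x a =
      lambdaIter lam n (Fin.cons (lam (x 0) (x 1) (a 1 / (a 0 + a 1))) fun i => x i.succ.succ)
        (Fin.cons (a 0 + a 1) fun i => a i.succ.succ) := by
  rw [lambdaIter, if_pos h]

theorem lambdaIter_succ_of_not_pos {x : Fin (n + 2) → Z} {a : Fin (n + 2) → ℝ}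
    (h : ¬ 0 < a 0 + a 1) :
    lambdaIter lam (n + 1) x a = lambdaIter lam n (fun i => x i.succ) fun i => a i.succ := by
  rw [lambdaIter, if_neg h]

theorem lambdaIter_const (hdiag : ∀ x : Z, ∀ t ∈ Icc (0 : ℝ) 1, lam x x t = x) :
    ∀ (n : ℕ) (y : Z) {a : Fin (n + 1) → ℝ}, 0 ≤ a → lambdaIter lam n (fun _ => y) a = y
  | 0, _, _, _ => rfl
  | n + 1, y, a, ha => by
    by_cases h : 0 < a 0 + a 1
    · have hcons : (Fin.cons y fun _ => y : Fin (n + 1) → Z) = fun _ => y :=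
        Fin.cons_self_tail fun _ : Fin (n + 1) => y
      rw [lambdaIter_succ_of_pos h, hdiag y _ (div_add_mem_Icc_s3 (ha 0) (ha 1)), hcons]
      exact lambdaIter_const hdiag n y (cons_add_succ_succ_nonneg ha)
    · rw [lambdaIter_succ_of_not_pos h]
      exact lambdaIter_const hdiag n y fun i => ha i.succ

theorem lambdaIter_snoc :
    ∀ (n : ℕ) (x : Fin (n + 1) → Z) {b : Fin (n + 1) → ℝ}, 0 ≤ b → 0 < ∑ i, b i →
      ∀ (y : Z) {t : ℝ}, 0 ≤ t →
      lambdaIter lam (n + 1) (Fin.snoc x y) (Fin.snoc b t) =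
        lam (lambdaIter lam n x b) y (t / (∑ i, b i + t))
  | 0, x, b, _, hsum, y, t, ht => by
    rw [Fin.sum_univ_one] at hsum ⊢
    simp [lambdaIter, Fin.snoc, add_pos_of_pos_of_nonneg hsum ht]
  | n + 1, x, b, hb, hsum, y, t, ht => by
    have hb0 : (Fin.snoc b t : Fin (n + 3) → ℝ) 0 = b 0 := Fin.snoc_castSucc (i := 0) ..
    have hb1 : (Fin.snoc b t : Fin (n + 3) → ℝ) 1 = b 1 := Fin.snoc_castSucc (i := 1) ..
    have hx0 : (Fin.snoc x y : Fin (n + 3) → Z) 0 = x 0 := Fin.snoc_castSucc (i := 0) ..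
    have hx1 : (Fin.snoc x y : Fin (n + 3) → Z) 1 = x 1 := Fin.snoc_castSucc (i := 1) ..
    by_cases h : 0 < b 0 + b 1
    · rw [lambdaIter_succ_of_pos (hb0 ▸ hb1 ▸ h), lambdaIter_succ_of_pos h, hb0, hb1, hx0, hx1,
        Fin.snoc_succ_succ, Fin.snoc_succ_succ,
        Fin.cons_snoc_eq_snoc_cons, Fin.cons_snoc_eq_snoc_cons,
        lambdaIter_snoc n _ (cons_add_succ_succ_nonneg hb)
          ((Fin.sum_cons_add_succ_succ b).symm ▸ hsum) y ht,
        Fin.sum_cons_add_succ_succ]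
    · have hb0' : b 0 = 0 :=
        le_antisymm (by linarith [not_lt.mp h, show 0 ≤ b 1 from hb 1]) (hb 0)
      have hsum_succ : ∑ i, b i = ∑ i : Fin (n + 1), b i.succ := by
        rw [Fin.sum_univ_succ, hb0', zero_add]
      rw [lambdaIter_succ_of_not_pos (hb0 ▸ hb1 ▸ h), lambdaIter_succ_of_not_pos h,
        Fin.snoc_succ, Fin.snoc_succ, hsum_succ]
      exact lambdaIter_snoc n _ (fun i => hb i.succ) (hsum_succ ▸ hsum) y ht

theorem lambdaIter_smul :
    ∀ (n : ℕ) (x : Fin (n + 1) → Z) (a : Fin (n + 1) → ℝ) {c : ℝ}, 0 < c →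
      lambdaIter lam n x (c • a) = lambdaIter lam n x a
  | 0, _, _, _, _ => rfl
  | n + 1, x, a, c, hc => by
    have hsum : (c • a) 0 + (c • a) 1 = c * (a 0 + a 1) := by simp [mul_add]
    by_cases h : 0 < a 0 + a 1
    · have hcons : (Fin.cons (c * (a 0 + a 1)) fun i => (c • a) i.succ.succ : Fin (n + 1) → ℝ) =
          c • Fin.cons (a 0 + a 1) fun i => a i.succ.succ := by
        ext i
        induction i using Fin.cases <;> simp
      rw [lambdaIter_succ_of_pos (hsum ▸ mul_pos hc h), lambdaIter_succ_of_pos h, hsum, hcons,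
        Pi.smul_apply, smul_eq_mul, mul_div_mul_left _ _ hc.ne']
      exact lambdaIter_smul n _ _ hc
    · rw [lambdaIter_succ_of_not_pos (hsum ▸ (mul_pos_iff_of_pos_left hc).not.2 h),
        lambdaIter_succ_of_not_pos h]
      exact lambdaIter_smul n _ (fun i => a i.succ) hc

end lambdaIter

section lambdaIterSet

variable {Z : Type*} {lam : Z → Z → ℝ → Z} {A : Set Z}

theorem lambdaIterSet_monotone (hzero : ∀ x y : Z, lam x y 0 = x) (hA : A.Nonempty) :
    Monotone (lambdaIterSet lam A) :=
  monotone_nat_of_le_succ fun _ z hz =>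
    let ⟨y, hy⟩ := hA
    ⟨(z, y, 0), ⟨hz, hy, left_mem_Icc.2 zero_le_one⟩, hzero z y⟩

theorem lambdaIter_mem_lambdaIterSet (hzero : ∀ x y : Z, lam x y 0 = x) (hA : A.Nonempty) :
    ∀ (m k : ℕ) {x : Fin (m + 1) → Z} {a : Fin (m + 1) → ℝ}, 0 ≤ a →
      x 0 ∈ lambdaIterSet lam A k → (∀ i : Fin m, x i.succ ∈ A) →
      lambdaIter lam m x a ∈ lambdaIterSet lam A (k + m)
  | 0, _, _, _, _, hx0, _ => hx0
  | m + 1, k, x, a, ha, hx0, hxA => by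
    by_cases h : 0 < a 0 + a 1
    · have hstep : lam (x 0) (x 1) (a 1 / (a 0 + a 1)) ∈ lambdaIterSet lam A (k + 1) :=
        ⟨(x 0, x 1, _), ⟨hx0, hxA 0, div_add_mem_Icc_s3 (ha 0) (ha 1)⟩, rfl⟩
      rw [lambdaIter_succ_of_pos h, show k + (m + 1) = k + 1 + m by omega]
      exact lambdaIter_mem_lambdaIterSet hzero hA m (k + 1) (cons_add_succ_succ_nonneg ha) hstep
        fun i => hxA i.succ
    · rw [lambdaIter_succ_of_not_pos h]
      refine lambdaIterSet_monotone hzero hA (by omega : 0 + m ≤ k + (m + 1)) ?_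
      exact lambdaIter_mem_lambdaIterSet hzero hA m 0 (fun i => ha i.succ) (hxA 0)
        fun i => hxA i.succ

theorem exists_lambdaIter_eq_of_mem_lambdaIterSet (hone : ∀ x y : Z, lam x y 1 = y)
    (hdiag : ∀ x : Z, ∀ t ∈ Icc (0 : ℝ) 1, lam x x t = x) :
    ∀ (n : ℕ) {z : Z}, z ∈ lambdaIterSet lam A n →
      ∃ (x : Fin (n + 1) → Z) (a : Fin (n + 1) → ℝ),
        (∀ i, x i ∈ A) ∧ a ∈ stdSimplex ℝ (Fin (n + 1)) ∧ z = lambdaIter lam n x a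
  | 0, z, hz => ⟨fun _ => z, fun _ => 1, fun _ => hz, ⟨fun _ => zero_le_one, by simp⟩, rfl⟩
  | n + 1, _, ⟨(w, y, t), ⟨hw, hy, ht0, ht1⟩, rfl⟩ => by
    dsimp only at hw hy ht0 ht1 ⊢
    obtain rfl | ht1 := ht1.eq_or_lt
    · refine ⟨fun _ => y, Pi.single 0 1, fun _ => hy, single_mem_stdSimplex ℝ 0, ?_⟩
      rw [hone, lambdaIter_const hdiag (n + 1) y (single_mem_stdSimplex ℝ 0).1]
    obtain ⟨x, a, hxA, ha, rfl⟩ := exists_lambdaIter_eq_of_mem_lambdaIterSet hone hdiag n hw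
    have hsum : ∑ i, ((1 - t) • a) i = 1 - t := by
      simp only [Pi.smul_apply, smul_eq_mul, ← Finset.mul_sum, ha.2, mul_one]
    refine ⟨Fin.snoc x y, Fin.snoc ((1 - t) • a) t, ?_, ⟨?_, ?_⟩, ?_⟩
    · intro i
      induction i using Fin.lastCases with
      | last => simpa using hy
      | cast j => simpa using hxA j
    · intro i
      induction i using Fin.lastCases with
      | last => simpa using ht0
      | cast j => simpa using mul_nonneg (sub_nonneg.2 ht1.le) (ha.1 j)
    · rw [Fin.sum_univ_castSucc]
      simp only [Fin.snoc_castSucc, Fin.snoc_last]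
      rw [hsum, sub_add_cancel]
    · rw [lambdaIter_snoc n x (smul_nonneg (sub_nonneg.2 ht1.le) ha.1)
          (hsum.symm ▸ sub_pos.2 ht1) y ht0,
        lambdaIter_smul n x a (sub_pos.2 ht1), hsum, sub_add_cancel, div_one]

end lambdaIterSet

/-- For a nonempty subset `A` of an equiconnected space `(Z, λ)` and `n ≥ 1`,
`λ^{n-1}(A)` is exactly the set of all convex combinations of `n` elements of `A`.
(Here `lambdaIterSet lam A n = λ^n(A)` and `lambdaIter lam n` is `λ_{n+1}`, so the statement
is instantiated at `n + 1` points.) -/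
theorem lambdaIterSet_eq_combinations {Z : Type*} [TopologicalSpace Z] (lam : Z → Z → ℝ → Z)
    (hlam : IsEquiconnecting lam) (A : Set Z) (hA : A.Nonempty) (n : ℕ) :
    lambdaIterSet lam A n =
      {z : Z | ∃ (x : Fin (n + 1) → Z) (a : Fin (n + 1) → ℝ),
        (∀ i, x i ∈ A) ∧ a ∈ stdSimplex ℝ (Fin (n + 1)) ∧ z = lambdaIter lam n x a} := by
  ext z
  refine ⟨exists_lambdaIter_eq_of_mem_lambdaIterSet hlam.map_one hlam.map_diag n, ?_⟩
  rintro ⟨x, a, hxA, ha, rfl⟩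
  simpa using lambdaIter_mem_lambdaIterSet hlam.map_zero hA n 0 ha.1 (hxA 0) fun i => hxA i.succ
end

section
/- The Sorgenfrey line (the real line with the topology generated by half-open intervals [a, b)) is a strong PP-space. Concretely: for every dense set D in the Sorgenfrey line there exist a sequence of locally finite partitions of unity ((φ_{i,n})_{i∈I_n})_{n∈ℕ} on the Sorgenfrey line and families (x_{i,n})_{i∈I_n} of points of D witnessing the strong PP property; such a witness is given by taking I_n = ℤ, φ_{i,n} the characteristic function of [(i−1)/n, i/n) and x_{i,n} any point of [i/n, (i+1)/n) ∩ D. -/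
open Set Function Filter Topology

universe u

/-- The Sorgenfrey line: the reals with the topology generated by half-open
intervals `[a, b)`. -/
def SorgenfreyLine : Type := ℝ

noncomputable instance : Field SorgenfreyLine :=
  inferInstanceAs (Field ℝ)

noncomputable instance : LinearOrder SorgenfreyLine :=
  inferInstanceAs (LinearOrder ℝ)

instance : IsStrictOrderedRing SorgenfreyLine :=
  inferInstanceAs (IsStrictOrderedRing ℝ)

instance : TopologicalSpace SorgenfreyLine :=
  TopologicalSpace.generateFrom {s : Set SorgenfreyLine | ∃ a b : SorgenfreyLine, s = Set.Ico a b}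

/-- The characteristic function (with real values) of `[(i-1)/(n+1), i/(n+1))` on the
Sorgenfrey line; the paper's `φ_{i,n}` (with `n ≥ 1` reindexed to `n + 1`). -/
noncomputable def sorgenfreyWitness (n : ℕ) (i : ℤ) : SorgenfreyLine → ℝ :=
  Set.indicator (Set.Ico (((i : SorgenfreyLine) - 1) / (n + 1)) ((i : SorgenfreyLine) / (n + 1)))
    fun _ => (1 : ℝ)

/-!
The intervals `[(i-1)/n, i/n)` are clopen in the Sorgenfrey line and partition it, so their
characteristic functions form a locally finite partition of unity. Every basic neighbourhood of
`x` contains some `[x, x + ε)`, and once `2/n < ε` the point chosen in `[i/n, (i+1)/n)` lies in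
`(x, x + 2/n)` whenever `x ∈ [(i-1)/n, i/n)`.
-/

section PartitionOfUnity

variable {I J X : Type*} [TopologicalSpace X]

theorem IsLocFinPartitionOfUnity.comp_equiv {φ : I → X → ℝ} (hφ : IsLocFinPartitionOfUnity φ)
    (e : J ≃ I) : IsLocFinPartitionOfUnity fun j => φ (e j) := by
  obtain ⟨hcont, hmem, hlf, hsum⟩ := hφ
  exact ⟨fun j => hcont (e j), fun j => hmem (e j), hlf.comp_injective e.injective,
    fun x => (finsum_comp_equiv e).trans (hsum x)⟩

theorem isLocFinPartitionOfUnity_indicator {s : I → Set X} (hs : ∀ i, IsClopen (s i))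
    (hpart : ∀ x, ∃! i, x ∈ s i) :
    IsLocFinPartitionOfUnity fun i => (s i).indicator fun _ => (1 : ℝ) := by
  have hsupp : ∀ i, closure (support ((s i).indicator fun _ => (1 : ℝ))) = s i := fun i => by
    rw [support_indicator, support_const one_ne_zero, inter_univ, (hs i).isClosed.closure_eq]
  refine ⟨fun i => (hs i).continuous_indicator continuous_const, fun i x => ?_, ?_, fun x => ?_⟩
  · by_cases hx : x ∈ s i <;> simp [hx]
  · intro x
    obtain ⟨i, hxi, -⟩ := hpart x
    refine ⟨s i, (hs i).isOpen.mem_nhds hxi, (finite_singleton i).subset ?_⟩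
    rintro j ⟨y, hyj, hyi⟩
    exact (hpart y).unique (hsupp j ▸ hyj) hyi
  · obtain ⟨i, hxi, huniq⟩ := hpart x
    rw [finsum_eq_single _ i fun j hj => indicator_of_notMem (fun hxj => hj (huniq j hxj)) _]
    exact indicator_of_mem hxi _

end PartitionOfUnity

section OrderedField

variable {K : Type*} [Field K] [LinearOrder K] [IsStrictOrderedRing K]

theorem mem_Ico_sub_one_div_iff_floor_eq [FloorRing K] {t : K} (ht : 0 < t) (i : ℤ) (x : K) :
    x ∈ Ico (((i : K) - 1) / t) ((i : K) / t) ↔ ⌊x * t⌋ = i - 1 := by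
  rw [mem_Ico, div_le_iff₀ ht, lt_div_iff₀ ht, Int.floor_eq_iff]
  push_cast
  rw [sub_add_cancel]

theorem mem_Ioo_of_mem_Ico_div {t a x y : K}
    (hx : x ∈ Ico ((a - 1) / t) (a / t)) (hy : y ∈ Ico (a / t) ((a + 1) / t)) :
    y ∈ Ioo x (x + 2 / t) := by
  have hsplit : (a + 1) / t = (a - 1) / t + 2 / t := by ring
  exact ⟨hx.2.trans_le hy.1, by linarith [hx.1, hy.2]⟩

theorem exists_forall_ge_two_div_lt [Archimedean K] {ε : K} (hε : 0 < ε) :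
    ∃ n₀ : ℕ, ∀ n ≥ n₀, 2 / ((n : K) + 1) < ε := by
  obtain ⟨n₀, hn₀⟩ := exists_nat_one_div_lt (half_pos hε)
  refine ⟨n₀, fun n hn => ?_⟩
  have := (Nat.one_div_le_one_div (α := K) hn).trans_lt hn₀
  rw [div_eq_mul_one_div 2]
  linarith

end OrderedField

namespace SorgenfreyLine

noncomputable instance : FloorRing SorgenfreyLine := inferInstanceAs (FloorRing ℝ)

theorem isTopologicalBasis_Ico :
    TopologicalSpace.IsTopologicalBasis
      {s : Set SorgenfreyLine | ∃ a b : SorgenfreyLine, s = Ico a b} where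
  exists_subset_inter := by
    rintro _ ⟨a, b, rfl⟩ _ ⟨c, d, rfl⟩ x hx
    rw [Ico_inter_Ico] at hx ⊢
    exact ⟨_, ⟨_, _, rfl⟩, hx, subset_rfl⟩
  sUnion_eq := sUnion_eq_univ_iff.2 fun x =>
    ⟨Ico x (x + 1), ⟨x, x + 1, rfl⟩, left_mem_Ico.2 (lt_add_one x)⟩
  eq_generateFrom := rfl

theorem isOpen_Ico (a b : SorgenfreyLine) : IsOpen (Ico a b) :=
  isTopologicalBasis_Ico.isOpen ⟨a, b, rfl⟩

theorem isOpen_Ici (a : SorgenfreyLine) : IsOpen (Ici a) :=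
  iUnion_Ico_right a ▸ isOpen_iUnion (isOpen_Ico a)

theorem isOpen_Iio (b : SorgenfreyLine) : IsOpen (Iio b) :=
  iUnion_Ico_left b ▸ isOpen_iUnion fun a => isOpen_Ico a b

theorem isClopen_Ico (a b : SorgenfreyLine) : IsClopen (Ico a b) := by
  have hIci : IsClosed (Ici a) := compl_Iio (a := a) ▸ (isOpen_Iio a).isClosed_compl
  have hIio : IsClosed (Iio b) := compl_Ici (a := b) ▸ (isOpen_Ici b).isClosed_compl
  exact ⟨Ici_inter_Iio (a := a) (b := b) ▸ hIci.inter hIio, isOpen_Ico a b⟩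

theorem exists_Ico_subset_of_mem_nhds {x : SorgenfreyLine} {U : Set SorgenfreyLine}
    (hU : U ∈ 𝓝 x) : ∃ ε > 0, Ico x (x + ε) ⊆ U := by
  obtain ⟨_, ⟨a, b, rfl⟩, hx, hsub⟩ := isTopologicalBasis_Ico.mem_nhds_iff.1 hU
  refine ⟨b - x, sub_pos.2 hx.2, ?_⟩
  rw [add_sub_cancel]
  exact (Ico_subset_Ico_left hx.1).trans hsub

theorem closure_support_sorgenfreyWitness (n : ℕ) (i : ℤ) :
    closure (support (sorgenfreyWitness n i)) =
      Ico (((i : SorgenfreyLine) - 1) / (n + 1)) ((i : SorgenfreyLine) / (n + 1)) := by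
  rw [sorgenfreyWitness, support_indicator, support_const one_ne_zero, inter_univ,
    (isClopen_Ico _ _).isClosed.closure_eq]

theorem isLocFinPartitionOfUnity_sorgenfreyWitness (n : ℕ) :
    IsLocFinPartitionOfUnity (sorgenfreyWitness n) := by
  have ht : (0 : SorgenfreyLine) < n + 1 := n.cast_add_one_pos
  refine isLocFinPartitionOfUnity_indicator (fun i => isClopen_Ico _ _) fun x => ?_
  simp only [mem_Ico_sub_one_div_iff_floor_eq ht]
  exact ⟨⌊x * (n + 1)⌋ + 1, by ring, fun j hj => by omega⟩

theorem sorgenfreyWitness_eventually_mem (p : ℕ → ℤ → SorgenfreyLine)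
    (hp : ∀ (n : ℕ) (i : ℤ), p n i ∈ Ico ((i : SorgenfreyLine) / (n + 1)) ((i + 1) / (n + 1)))
    (x : SorgenfreyLine) (U : Set SorgenfreyLine) (hU : U ∈ 𝓝 x) :
    ∃ n₀ : ℕ, ∀ n ≥ n₀, ∀ i : ℤ,
      x ∈ closure (support (sorgenfreyWitness n i)) → p n i ∈ U := by
  obtain ⟨ε, hε, hsub⟩ := exists_Ico_subset_of_mem_nhds hU
  obtain ⟨n₀, hn₀⟩ := exists_forall_ge_two_div_lt hε
  refine ⟨n₀, fun n hn i hx => hsub ?_⟩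
  rw [closure_support_sorgenfreyWitness] at hx
  have hpx := mem_Ioo_of_mem_Ico_div hx (hp n i)
  exact ⟨hpx.1.le, hpx.2.trans_le (by linarith [hn₀ n hn])⟩

theorem exists_forall_mem_Ico_div_inter {D : Set SorgenfreyLine} (hD : Dense D) :
    ∃ p : ℕ → ℤ → SorgenfreyLine, ∀ (n : ℕ) (i : ℤ),
      p n i ∈ Ico ((i : SorgenfreyLine) / (n + 1)) ((i + 1) / (n + 1)) ∧ p n i ∈ D := by
  have hne : ∀ (n : ℕ) (i : ℤ),
      (Ico ((i : SorgenfreyLine) / (n + 1)) ((i + 1) / (n + 1)) ∩ D).Nonempty := fun n i =>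
    hD.inter_open_nonempty _ (isOpen_Ico _ _) <| nonempty_Ico.2 <|
      div_lt_div_of_pos_right (lt_add_one _) n.cast_add_one_pos
  choose p hp using hne
  exact ⟨p, hp⟩

end SorgenfreyLine

/-- The Sorgenfrey line is a strong PP-space; moreover, for every dense `D` a
witness is given by the characteristic functions `φ_{i,n}` of the intervals
`[(i-1)/n, i/n)`, `i ∈ ℤ`, together with any points `x_{i,n} ∈ [i/n, (i+1)/n) ∩ D`. -/
theorem sorgenfreyLine_isStrongPPSpace :
    IsStrongPPSpace.{u} SorgenfreyLine ∧
    ∀ D : Set SorgenfreyLine, Dense D →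
      ∀ p : ℕ → ℤ → SorgenfreyLine,
        (∀ (n : ℕ) (i : ℤ),
          p n i ∈ Set.Ico ((i : SorgenfreyLine) / (n + 1)) (((i : SorgenfreyLine) + 1) / (n + 1))
            ∧ p n i ∈ D) →
        (∀ n : ℕ, IsLocFinPartitionOfUnity (sorgenfreyWitness n)) ∧
        ∀ x : SorgenfreyLine, ∀ U ∈ nhds x, ∃ n₀ : ℕ, ∀ n ≥ n₀, ∀ i : ℤ,
          x ∈ closure (Function.support (sorgenfreyWitness n i)) → p n i ∈ U := by
  refine ⟨fun D hD => ?_, fun D _ p hp =>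
    ⟨SorgenfreyLine.isLocFinPartitionOfUnity_sorgenfreyWitness,
      SorgenfreyLine.sorgenfreyWitness_eventually_mem p fun n i => (hp n i).1⟩⟩
  obtain ⟨p, hp⟩ := SorgenfreyLine.exists_forall_mem_Ico_div_inter hD
  refine ⟨fun _ => ULift ℤ, fun n i => sorgenfreyWitness n i.down, fun n i => p n i.down,
    fun n => (SorgenfreyLine.isLocFinPartitionOfUnity_sorgenfreyWitness n).comp_equiv
      Equiv.ulift, fun n i => (hp n i.down).2, fun x U hU => ?_⟩
  obtain ⟨n₀, hn₀⟩ :=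
    SorgenfreyLine.sorgenfreyWitness_eventually_mem p (fun n i => (hp n i).1) x U hU
  exact ⟨n₀, fun n hn i => hn₀ n hn i.down⟩
end

section
/- Let X be a strong PP-space, Y a topological space and (Z, λ) a locally convex equiconnected space. Let f : X × Y → Z be such that the map x ↦ f(x,y) is continuous for every y ∈ Y and the set {x ∈ X : the map y ↦ f(x,y) is continuous} is dense in X. Then f is the pointwise limit of a sequence of continuous maps X × Y → Z (i.e. (X, Y, Z) is a Rudin 0-triple). -/
open Set Function Filter Topology

universe u

/-!
Let `D` be the dense set of `x` for which `f(x, ·)` is continuous, and take the partitions of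
unity `(φ_{i,n})` and points `x_{i,n} ∈ D` that the strong PP property gives for `D`. Let
`g_n(x, y)` be the `λ`-combination of the points `f(x_{i,n}, y)` with the weights `φ_{i,n}(x)`,
finitely many of which are nonzero, combined in a fixed linear order of the indices.

Locally `g_n` is a fixed finite combination of continuous data, so it is continuous except
possibly where a partial sum of the weights vanishes. There the next `λ`-parameter is
undetermined, but the combination is continuous in that parameter, ranging over the compact
interval `[0,1]`, and does not depend on it; the tube lemma gives continuity.

Given a neighbourhood `U` of `f(x, y)`, local convexity gives `V` with `λ^∞(V) ⊆ U`. For large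
`n`, every `x_{i,n}` with `x ∈ supp φ_{i,n}` lies in the neighbourhood `{x' | f(x', y) ∈ V}` of
`x`, so `g_n(x, y)` is a `λ`-combination of points of `V`, hence lies in `U`.
-/

/-- Because `x / 0 = 0`, a point of weight `0` is absorbed as `λ(p.1, q.1, 0) = p.1`, so unlike
`lambdaIter` the combination needs no case split and ignores zero weights. -/
noncomputable def lambdaStep {Z : Type*} (lam : Z → Z → ℝ → Z) (p q : Z × ℝ) : Z × ℝ :=
  (lam p.1 q.1 (q.2 / (p.2 + q.2)), p.2 + q.2)

noncomputable def lambdaComb {Z : Type*} (lam : Z → Z → ℝ → Z) (p : Z × ℝ)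
    (l : List (Z × ℝ)) : Z :=
  (l.foldl (lambdaStep lam) p).1

section LambdaComb

variable {Z : Type*} {lam : Z → Z → ℝ → Z}

@[simp]
lemma lambdaComb_cons (p q : Z × ℝ) (l : List (Z × ℝ)) :
    lambdaComb lam p (q :: l) = lambdaComb lam (lambdaStep lam p q) l := rfl

lemma lambdaComb_mem_lambdaIterSet {V : Set Z} {m : ℕ} {z : Z} {a : ℝ}
    (hz : z ∈ lambdaIterSet lam V m) (ha : 0 ≤ a) {l : List (Z × ℝ)}
    (hl : ∀ q ∈ l, q.1 ∈ V ∧ 0 ≤ q.2) :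
    lambdaComb lam (z, a) l ∈ lambdaIterSet lam V (m + l.length) := by
  induction l generalizing z a m with
  | nil => exact hz
  | cons q l ih =>
    obtain ⟨⟨hqV, hq⟩, hl⟩ := List.forall_mem_cons.1 hl
    have hstep : lam z q.1 (q.2 / (a + q.2)) ∈ lambdaIterSet lam V (m + 1) :=
      ⟨(z, q.1, q.2 / (a + q.2)),
        ⟨hz, hqV, unitInterval.div_mem hq (add_nonneg ha hq) (le_add_of_nonneg_left ha)⟩, rfl⟩
    rw [List.length_cons, ← Nat.add_assoc, Nat.add_right_comm]
    exact ih hstep (add_nonneg ha hq) hl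

lemma lambdaComb_mem_lambdaInftySet {V : Set Z} {z : Z} {a : ℝ} (hz : z ∈ V) (ha : 0 ≤ a)
    {l : List (Z × ℝ)} (hne : l ≠ []) (hl : ∀ q ∈ l, q.1 ∈ V ∧ 0 ≤ q.2) :
    lambdaComb lam (z, a) l ∈ lambdaInftySet lam V := by
  obtain ⟨n, hn⟩ := Nat.exists_eq_succ_of_ne_zero (List.length_pos_iff.2 hne).ne'
  exact mem_iUnion.2 ⟨n, by simpa [hn] using lambdaComb_mem_lambdaIterSet (m := 0) hz ha hl⟩

variable [TopologicalSpace Z]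

lemma IsEquiconnecting.continuous_comp (hlam : IsEquiconnecting lam) {Q : Type*}
    [TopologicalSpace Q] {a b : Q → Z} {t : Q → unitInterval} (ha : Continuous a)
    (hb : Continuous b) (ht : Continuous t) : Continuous fun q => lam (a q) (b q) (t q) :=
  hlam.continuousOn.comp_continuous (ha.prodMk (hb.prodMk (continuous_subtype_val.comp ht)))
    fun q => ⟨trivial, trivial, (t q).2⟩

lemma lambdaStep_zero_right (hlam : IsEquiconnecting lam) (p : Z × ℝ) (z : Z) :
    lambdaStep lam p (z, 0) = p := by
  simp [lambdaStep, hlam.map_zero]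

lemma lambdaComb_filter (hlam : IsEquiconnecting lam) (p : Z × ℝ) (l : List (Z × ℝ)) :
    lambdaComb lam p (l.filter (·.2 ≠ 0)) = lambdaComb lam p l := by
  induction l generalizing p with
  | nil => rfl
  | cons q l ih =>
    obtain ⟨z, a⟩ := q
    by_cases ha : a = 0
    · subst ha
      rw [List.filter_cons_of_neg (by simp), ih, lambdaComb_cons, lambdaStep_zero_right hlam]
    · rw [List.filter_cons_of_pos (by simpa), lambdaComb_cons, lambdaComb_cons, ih]

lemma lambdaComb_zero_left (hlam : IsEquiconnecting lam) (z z' : Z) {l : List (Z × ℝ)}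
    (hl : (l.map Prod.snd).sum ≠ 0) : lambdaComb lam (z, 0) l = lambdaComb lam (z', 0) l := by
  induction l with
  | nil => simp at hl
  | cons q l ih =>
    obtain ⟨z₁, a⟩ := q
    by_cases ha : a = 0
    · subst ha
      simp only [lambdaComb_cons, lambdaStep_zero_right hlam]
      exact ih (by simpa using hl)
    · simp [lambdaStep, div_self ha, hlam.map_one]

end LambdaComb

lemma continuousAt_comp_of_const_on_fiber {Q T W : Type*} [TopologicalSpace Q]
    [TopologicalSpace T] [CompactSpace T] [TopologicalSpace W] {H : Q × T → W} {q₀ : Q}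
    (hH : ∀ t, ContinuousAt H (q₀, t)) (τ : Q → T) (hconst : ∀ t, H (q₀, t) = H (q₀, τ q₀)) :
    ContinuousAt (fun q => H (q, τ q)) q₀ := by
  intro U hU
  have hfiber : ∀ᶠ q in 𝓝 q₀, ∀ t ∈ univ, H (q, t) ∈ U :=
    isCompact_univ.eventually_forall_of_forall_eventually fun t _ =>
      hH t (by rwa [hconst t])
  exact hfiber.mono fun q hq => hq (τ q) trivial

section ContinuityOfLambdaComb

variable {Z : Type*} [TopologicalSpace Z] {lam : Z → Z → ℝ → Z}

theorem continuousAt_lambdaComb (hlam : IsEquiconnecting lam) {Q ι : Type*}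
    [TopologicalSpace Q] (l : List ι) {hd : Q → Z} {h0 : Q → ℝ} {pt : ι → Q → Z}
    {w : ι → Q → ℝ} (hhd : Continuous hd) (hh0 : Continuous h0)
    (hpt : ∀ i ∈ l, Continuous (pt i)) (hw : ∀ i ∈ l, Continuous (w i))
    (hh0_nonneg : ∀ q, 0 ≤ h0 q) (hw_nonneg : ∀ i ∈ l, ∀ q, 0 ≤ w i q) {q₀ : Q}
    (hq₀ : h0 q₀ + (l.map (w · q₀)).sum ≠ 0) :
    ContinuousAt (fun q => lambdaComb lam (hd q, h0 q) (l.map fun i => (pt i q, w i q))) q₀ := by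
  induction l generalizing Q with
  | nil => exact hhd.continuousAt
  | cons i l ih =>
    simp only [List.forall_mem_cons] at hpt hw hw_nonneg
    let τ : Q → unitInterval := fun q => ⟨w i q / (h0 q + w i q),
      unitInterval.div_mem (hw_nonneg.1 q) (add_nonneg (hh0_nonneg q) (hw_nonneg.1 q))
        (le_add_of_nonneg_left (hh0_nonneg q))⟩
    let H : Q × unitInterval → Z := fun p => lambdaComb lam
      (lam (hd p.1) (pt i p.1) p.2, h0 p.1 + w i p.1) (l.map fun j => (pt j p.1, w j p.1))
    have hH : ∀ t, ContinuousAt H (q₀, t) := fun t =>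
      ih (hlam.continuous_comp (hhd.comp continuous_fst) (hpt.1.comp continuous_fst)
          continuous_snd)
        ((hh0.add hw.1).comp continuous_fst) (fun j hj => (hpt.2 j hj).comp continuous_fst)
        (fun j hj => (hw.2 j hj).comp continuous_fst)
        (fun p => add_nonneg (hh0_nonneg p.1) (hw_nonneg.1 p.1))
        (fun j hj p => hw_nonneg.2 j hj p.1) (by simpa [add_assoc] using hq₀)
    change ContinuousAt (fun q => H (q, τ q)) q₀
    by_cases hzero : h0 q₀ + w i q₀ = 0
    · -- the parameter `τ q₀` is undetermined, but it is absorbed with weight `0`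
      refine continuousAt_comp_of_const_on_fiber hH τ fun t => ?_
      simp only [H, hzero]
      have hrest : (l.map (w · q₀)).sum ≠ 0 := by simpa [← add_assoc, hzero] using hq₀
      exact lambdaComb_zero_left hlam _ _ (by simpa [Function.comp_def] using hrest)
    · have hτ : ContinuousAt τ q₀ :=
        (hw.1.continuousAt.div (hh0.add hw.1).continuousAt hzero).codRestrict _
      exact ContinuousAt.comp (f := fun q => (q, τ q)) (hH (τ q₀)) (continuousAt_id.prodMk hτ)

theorem continuousAt_lambdaComb_zero (hlam : IsEquiconnecting lam) {Q ι : Type*}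
    [TopologicalSpace Q] (z : Q → Z) (l : List ι) {pt : ι → Q → Z} {w : ι → Q → ℝ}
    (hpt : ∀ i ∈ l, Continuous (pt i)) (hw : ∀ i ∈ l, Continuous (w i))
    (hw_nonneg : ∀ i ∈ l, ∀ q, 0 ≤ w i q) {q₀ : Q} (hq₀ : 0 < (l.map (w · q₀)).sum) :
    ContinuousAt (fun q => lambdaComb lam (z q, 0) (l.map fun i => (pt i q, w i q))) q₀ := by
  cases l with
  | nil => simp at hq₀
  | cons i l =>
    have hpos : ∀ᶠ q in 𝓝 q₀, 0 < ((i :: l).map (w · q)).sum :=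
      (continuous_list_sum _ hw).continuousAt.eventually (lt_mem_nhds hq₀)
    refine (continuousAt_lambdaComb hlam (i :: l) (hpt i List.mem_cons_self) continuous_const hpt
      hw (fun _ => le_rfl) hw_nonneg (by simpa using hq₀.ne')).congr (hpos.mono fun q hq => ?_)
    exact lambdaComb_zero_left hlam _ _ (by simpa [Function.comp_def] using hq.ne')

end ContinuityOfLambdaComb

theorem Finset.sort_filter {α : Type*} [LinearOrder α] (s : Finset α) (p : α → Prop)
    [DecidablePred p] : (s.filter p).sort = s.sort.filter p :=
  List.Perm.eq_of_pairwise' (Finset.pairwise_sort _ _)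
    ((s.pairwise_sort _).sublist List.filter_sublist)
    ((List.perm_ext_iff_of_nodup (Finset.sort_nodup _ _) ((s.sort_nodup _).filter _)).2
      fun a => by simp)

theorem Finset.sum_map_sort {α M : Type*} [LinearOrder α] [AddCommMonoid M] (s : Finset α)
    (f : α → M) : (s.sort.map f).sum = ∑ i ∈ s, f i := by
  rw [Finset.sum_eq_multiset_sum, ← s.sort_eq (· ≤ ·), Multiset.map_coe, Multiset.sum_coe]

namespace IsLocFinPartitionOfUnity

variable {I X : Type*} [TopologicalSpace X] {φ : I → X → ℝ}

lemma finite_support (hφ : IsLocFinPartitionOfUnity φ) (x : X) :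
    (support fun i => φ i x).Finite :=
  (hφ.2.2.1.point_finite x).subset fun _ hi => subset_closure hi

lemma eventually_support_subset (hφ : IsLocFinPartitionOfUnity φ) (x₀ : X) :
    ∃ s : Finset I, ∀ᶠ x in 𝓝 x₀, (support fun i => φ i x) ⊆ s := by
  obtain ⟨W, hW, hfin⟩ := hφ.2.2.1 x₀
  exact ⟨hfin.toFinset, Filter.mem_of_superset hW fun x hx i hi => by
    simpa using ⟨x, subset_closure hi, hx⟩⟩

lemma sum_eq_one_of_support_subset (hφ : IsLocFinPartitionOfUnity φ) {x : X} {s : Finset I}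
    (hs : (support fun i => φ i x) ⊆ s) : ∑ i ∈ s, φ i x = 1 :=
  (finsum_eq_sum_of_support_subset _ hs).symm.trans (hφ.2.2.2 x)

end IsLocFinPartitionOfUnity

/-- `z` only supplies an initial point of weight `0`; it does not affect the value. -/
noncomputable def partitionComb {I X Y Z : Type*} [LinearOrder I] [TopologicalSpace X]
    (lam : Z → Z → ℝ → Z) {φ : I → X → ℝ} (hφ : IsLocFinPartitionOfUnity φ)
    (pt : I → Y → Z) (z : X × Y → Z) (q : X × Y) : Z :=
  lambdaComb lam (z q, 0)
    (((hφ.finite_support q.1).toFinset.sort).map fun i => (pt i q.2, φ i q.1))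

section PartitionComb

variable {I X Y Z : Type*} [LinearOrder I] [TopologicalSpace X] {lam : Z → Z → ℝ → Z}
  {φ : I → X → ℝ}

lemma partitionComb_eq_of_support_subset [TopologicalSpace Z] (hlam : IsEquiconnecting lam)
    (hφ : IsLocFinPartitionOfUnity φ) (pt : I → Y → Z) (z : X × Y → Z) {x : X} {s : Finset I}
    (hs : (support fun i => φ i x) ⊆ s) (y : Y) :
    partitionComb lam hφ pt z (x, y) =
      lambdaComb lam (z (x, y), 0) (s.sort.map fun i => (pt i y, φ i x)) := by
  have hactive : (hφ.finite_support x).toFinset = s.filter (φ · x ≠ 0) := by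
    ext i
    simpa using fun h => hs h
  rw [partitionComb, hactive, Finset.sort_filter]
  refine .trans ?_ (lambdaComb_filter hlam _ _)
  rw [List.filter_map]
  rfl

lemma partitionComb_mem_lambdaInftySet (hφ : IsLocFinPartitionOfUnity φ) (pt : I → Y → Z)
    (z : X × Y → Z) {V : Set Z} {x : X} {y : Y} (hz : z (x, y) ∈ V)
    (hV : ∀ i, φ i x ≠ 0 → pt i y ∈ V) :
    partitionComb lam hφ pt z (x, y) ∈ lambdaInftySet lam V := by
  have hsum : ((hφ.finite_support x).toFinset.sort.map (φ · x)).sum = 1 := by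
    rw [Finset.sum_map_sort]
    exact hφ.sum_eq_one_of_support_subset (by simp)
  refine lambdaComb_mem_lambdaInftySet hz le_rfl ?_ ?_
  · rw [Ne, List.map_eq_nil_iff]
    intro h
    simp [h] at hsum
  · refine List.forall_mem_map.2 fun i hi => ⟨hV i ?_, (hφ.2.1 i x).1⟩
    simpa using hi

variable [TopologicalSpace Y] [TopologicalSpace Z]

theorem continuous_partitionComb (hlam : IsEquiconnecting lam) (hφ : IsLocFinPartitionOfUnity φ)
    {pt : I → Y → Z} (hpt : ∀ i, Continuous (pt i)) (z : X × Y → Z) :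
    Continuous (partitionComb lam hφ pt z) := by
  refine continuous_iff_continuousAt.2 fun q₀ => ?_
  obtain ⟨s, hs⟩ := hφ.eventually_support_subset q₀.1
  have hlocal : (fun q => lambdaComb lam (z q, 0) (s.sort.map fun i => (pt i q.2, φ i q.1)))
      =ᶠ[𝓝 q₀] partitionComb lam hφ pt z :=
    (continuousAt_fst.eventually hs).mono fun q hq =>
      (partitionComb_eq_of_support_subset hlam hφ pt z hq q.2).symm
  refine ContinuousAt.congr ?_ hlocal
  refine continuousAt_lambdaComb_zero hlam z _ (fun i _ => (hpt i).comp continuous_snd)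
    (fun i _ => (hφ.1 i).comp continuous_fst) (fun i _ q => (hφ.2.1 i q.1).1) ?_
  simp only [Finset.sum_map_sort, Function.comp_apply,
    hφ.sum_eq_one_of_support_subset hs.self_of_nhds, zero_lt_one]

end PartitionComb

/-- If `X` is a strong PP-space, `Y` a topological space and `(Z, λ)` a locally
convex equiconnected space, then every `f : X × Y → Z` which is continuous in the first
variable and has continuous `y`-sections for a dense set of `x`'s is a pointwise limit of a
sequence of continuous maps, i.e. `(X, Y, Z)` is a Rudin `0`-triple. -/
theorem rudin_zero_triple_of_strongPP {X Y Z : Type*} [TopologicalSpace X] [TopologicalSpace Y]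
    [TopologicalSpace Z] (hX : IsStrongPPSpace.{u} X)
    (lam : Z → Z → ℝ → Z) (hlam : IsEquiconnecting lam)
    (hconv : IsLocallyConvexEquiconnected lam)
    (f : X × Y → Z)
    (hsep : ∀ y : Y, Continuous fun x => f (x, y))
    (hdense : Dense {x : X | Continuous fun y => f (x, y)}) :
    ∃ g : ℕ → X × Y → Z, (∀ n, Continuous (g n)) ∧
      ∀ q : X × Y, Filter.Tendsto (fun n => g n q) Filter.atTop (nhds (f q)) := by
  obtain ⟨I, φ, p, hφ, hpD, hp⟩ := hX _ hdense
  let _ : ∀ n, LinearOrder (I n) := fun n => IsWellOrder.linearOrder WellOrderingRel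
  refine ⟨fun n => partitionComb lam (hφ n) (fun i y => f (p n i, y)) f,
    fun n => continuous_partitionComb hlam (hφ n) (hpD n) f, fun ⟨x, y⟩ => ?_⟩
  refine Filter.tendsto_atTop'.2 fun U hU => ?_
  obtain ⟨V, hV, hVU⟩ := hconv _ U hU
  obtain ⟨n₀, hn₀⟩ := hp x _ ((hsep y).continuousAt.preimage_mem_nhds hV)
  exact ⟨n₀, fun n hn => hVU <| partitionComb_mem_lambdaInftySet _ _ _ (mem_of_mem_nhds hV)
    fun i hi => hn₀ n hn i (subset_closure hi)⟩
end
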